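/- arXiv:1602.08912 — 3 statements merged into one kernel-verified Lean document; each statement's English description precedes it below -/
import Mathlib

section
/- Let g be an antagonistic game with players a and b. If s_a is a subgame-optimal strategy for player a, then for every history h and every run ρ of the future game g^h such that Player 1 has a winning strategy in the future threshold game (g^h)_{a,ρ}, the shifted strategy s_a^h is a winning strategy in (g^h)_{a,ρ}. Consequently, if all future threshold games of g are determined and both players have subgame-optimal strategies using m bits of memory, then every future threshold game of g is determined via a winning strategy using m bits of memory. -/
namespace GG

variable {V C A : Type}

/-- Append a finite list in front of an infinite sequence. -/
def appSeq (l : List V) (ρ : ℕ → V) : ℕ → V :=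
  fun n => if n < l.length then l.getD n (ρ 0) else ρ (n - l.length)

/-- Glue two histories, identifying the last vertex of `l` with the first of `l'`. -/
def glueL (l l' : List V) : List V := l.dropLast ++ l'

/-- Glue a history with a run, identifying the last vertex of `l` with the start of `ρ`. -/
def glueR (l : List V) (ρ : ℕ → V) : ℕ → V := appSeq l.dropLast ρ

/-- Ultimately periodic (regular) sequence. -/
def UltPeriodic (ρ : ℕ → V) : Prop := ∃ k p : ℕ, 0 < p ∧ ∀ n, k ≤ n → ρ (n + p) = ρ n

/-- Strict weak order: irreflexive, transitive, with transitive incomparability. -/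
def SWO (r : (ℕ → C) → (ℕ → C) → Prop) : Prop :=
  (∀ x, ¬ r x x) ∧ (∀ x y z, r x y → r y z → r x z) ∧
    (∀ x y z, ¬ r x y → ¬ r y z → ¬ r x z)

/-- A strategy uses `m` bits of memory: it is induced by a strategic update
`σ : V × {0,1}^m → V × {0,1}^m` together with an initial memory content. -/
def UsesMem (m : ℕ) (s : List V → V) : Prop :=
  ∃ (σ : V × (Fin m → Bool) → V × (Fin m → Bool)) (M₀ : Fin m → Bool),
    ∀ (l : List V) (v : V),
      s (l ++ [v]) = (σ (v, l.foldl (fun M u => (σ (u, M)).2) M₀)).1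

/-- A finite-memory strategy. -/
def FinMem (s : List V → V) : Prop := ∃ m, UsesMem m s

/-- Regular language: recognized by a deterministic finite automaton. -/
def RegLang {α : Type} (L : Set (List α)) : Prop :=
  ∃ (Q : Type) (_ : Fintype Q) (step : Q → α → Q) (init : Q) (acc : Set Q),
    ∀ w : List α, w ∈ L ↔ w.foldl step init ∈ acc

/-- Repeat a finite word `n` times. -/
def repW (l : List C) (n : ℕ) : List C := (List.replicate n l).flatten

/-- The infinite word `u · w^ω` (with default letter `d`, unused when `w ≠ []`). -/
def extWord (d : C) (u w : List C) : ℕ → C := fun n =>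
  if n < u.length then u.getD n d else w.getD ((n - u.length) % w.length) d

/-- The regular-Mont condition for a preference on infinite color sequences. -/
def RegularMont (prec : (ℕ → C) → (ℕ → C) → Prop) : Prop :=
  ∀ (d : C) (h₀ h₁ h₂ h₃ : List C), h₁ ≠ [] → h₃ ≠ [] →
    (∀ n : ℕ, prec (extWord d (h₀ ++ repW h₁ n ++ h₂) h₃)
        (extWord d (h₀ ++ repW h₁ (n + 1) ++ h₂) h₃)) →
    prec (extWord d (h₀ ++ h₂) h₃) (extWord d h₀ h₁)

/-- The weak optimality-is-regular property of a preference. -/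
def WeakOIR (prec : (ℕ → C) → (ℕ → C) → Prop) : Prop :=
  ∀ p q : ℕ → C, UltPeriodic p → UltPeriodic q →
    ∃ M : Set (List C), RegLang M ∧ ∀ h : List C, h ∈ M ↔ prec (appSeq h p) (appSeq h q)

/-- Automatic-piecewise prefix-linearity of a preference on `C^ω` (word level). -/
def APPLword (prec : (ℕ → C) → (ℕ → C) → Prop) : Prop :=
  ∃ (Q : Type) (_ : Fintype Q) (step : Q → C → Q) (init : Q),
    ∀ h h' : List C, h.foldl step init = h'.foldl step init →
      ∀ p q : ℕ → C,
        (prec (appSeq h p) (appSeq h q) ↔ prec (appSeq h' p) (appSeq h' q))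

/-- A multi-player game played on a finite directed graph in which every
vertex has an outgoing edge. Players compare runs via color traces. -/
structure Game (V C A : Type) where
  edge : V → V → Prop
  serial : ∀ v, ∃ w, edge v w
  start : V
  owner : V → A
  color : V → C
  pref : A → (ℕ → C) → (ℕ → C) → Prop

/-- Shifted strategy `s^h`. -/
def shiftStrat (l : List V) (s : List V → V) : List V → V :=
  fun l' => s (l.dropLast ++ l')

namespace Game

variable (g : Game V C A)

def lastV (l : List V) : V := l.getLast?.getD g.start

/-- Histories: finite paths starting at the start vertex. -/
def IsHist (l : List V) : Prop :=
  l ≠ [] ∧ l.head? = some g.start ∧ l.Chain' g.edge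

/-- Runs: infinite paths starting at the start vertex. -/
def IsRun (ρ : ℕ → V) : Prop :=
  ρ 0 = g.start ∧ ∀ n, g.edge (ρ n) (ρ (n + 1))

/-- Runs are compared via their color traces. -/
def runPref (a : A) (ρ ρ' : ℕ → V) : Prop :=
  g.pref a (fun n => g.color (ρ n)) (fun n => g.color (ρ' n))

/-- Validity of a strategy on the set `P` of controlled vertices. -/
def ValidOn (P : V → Prop) (s : List V → V) : Prop :=
  ∀ l, g.IsHist l → P (g.lastV l) → g.edge (g.lastV l) (s l)

def ValidStrat (a : A) (s : List V → V) : Prop :=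
  g.ValidOn (fun v => g.owner v = a) s

/-- Validity for the coalition of all players other than `a`. -/
def ValidCo (a : A) (s : List V → V) : Prop :=
  g.ValidOn (fun v => g.owner v ≠ a) s

def _root_.GG.histUpTo (ρ : ℕ → V) (n : ℕ) : List V := (List.range (n + 1)).map ρ

def _root_.GG.CompatOn (P : V → Prop) (s : List V → V) (ρ : ℕ → V) : Prop :=
  ∀ n, P (ρ n) → ρ (n + 1) = s (GG.histUpTo ρ n)

/-- A run is compatible with a strategy of player `a`. -/
def Compat (a : A) (s : List V → V) (ρ : ℕ → V) : Prop :=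
  GG.CompatOn (fun v => g.owner v = a) s ρ

def CompatCo (a : A) (s : List V → V) (ρ : ℕ → V) : Prop :=
  GG.CompatOn (fun v => g.owner v ≠ a) s ρ

/-- `s` is a winning strategy of Player 1 (= player `a`) in the threshold game
`g_{a,ρ}`: every compatible run is strictly preferred to `ρ`. -/
def Wins1 (a : A) (ρ : ℕ → V) (s : List V → V) : Prop :=
  g.ValidStrat a s ∧ ∀ ρ', g.IsRun ρ' → g.Compat a s ρ' → g.runPref a ρ ρ'

/-- `s` is a winning strategy of Player 2 (the coalition) in the threshold game `g_{a,ρ}`. -/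
def Wins2 (a : A) (ρ : ℕ → V) (s : List V → V) : Prop :=
  g.ValidCo a s ∧ ∀ ρ', g.IsRun ρ' → g.CompatCo a s ρ' → ¬ g.runPref a ρ ρ'

/-- Player 1 wins the non-strict threshold game for `a` and `ρ` with `s`. -/
def Wins1NS (a : A) (ρ : ℕ → V) (s : List V → V) : Prop :=
  g.ValidStrat a s ∧ ∀ ρ', g.IsRun ρ' → g.Compat a s ρ' → ¬ g.runPref a ρ' ρ

/-- Player 2 wins the non-strict threshold game for `a` and `ρ` with `s`. -/
def Wins2NS (a : A) (ρ : ℕ → V) (s : List V → V) : Prop :=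
  g.ValidCo a s ∧ ∀ ρ', g.IsRun ρ' → g.CompatCo a s ρ' → g.runPref a ρ' ρ

/-- The future game `g^h` after history `l`. -/
def future (l : List V) : Game V C A where
  edge := g.edge
  serial := g.serial
  start := g.lastV l
  owner := g.owner
  color := g.color
  pref := fun a p q =>
    g.pref a (appSeq (l.dropLast.map g.color) p) (appSeq (l.dropLast.map g.color) q)

/-- The guarantee `γ_a(s)` of a strategy. -/
def gam (a : A) (s : List V → V) : Set (ℕ → V) :=
  {ρ | g.IsRun ρ ∧ ∃ ρ', g.IsRun ρ' ∧ g.Compat a s ρ' ∧ ¬ g.runPref a ρ ρ'}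

/-- The best guarantee `Γ_a`. -/
def Gam (a : A) : Set (ℕ → V) :=
  ⋂ s ∈ {s : List V → V | g.ValidStrat a s}, g.gam a s

def Optimal (a : A) (s : List V → V) : Prop := g.gam a s = g.Gam a

def OptimalAt (a : A) (s : List V → V) (l : List V) : Prop :=
  (g.future l).Optimal a (shiftStrat l s)

def SubgameOptimal (a : A) (s : List V → V) : Prop :=
  ∀ l, g.IsHist l → g.OptimalAt a s l

/-- A history is compatible with a strategy of player `a`. -/
def HistCompat (a : A) (s : List V → V) (l : List V) : Prop :=
  ∀ i : ℕ, i + 1 < l.length → g.owner (l.getD i g.start) = a →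
    l.getD (i + 1) g.start = s (l.take (i + 1))

def ConsistentOptimal (a : A) (s : List V → V) : Prop :=
  ∀ l, g.IsHist l → g.HistCompat a s l → g.OptimalAt a s l

/-- The history of the play induced by a strategy profile, up to stage `n`. -/
def playHist (prof : A → List V → V) : ℕ → List V
  | 0 => [g.start]
  | n + 1 =>
      playHist prof n ++
        [prof (g.owner (g.lastV (playHist prof n))) (playHist prof n)]

/-- The run induced by a strategy profile. -/
def play (prof : A → List V → V) : ℕ → V := fun n => g.lastV (g.playHist prof n)

/-- Nash equilibrium. -/
def IsNash [DecidableEq A] (prof : A → List V → V) : Prop :=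
  (∀ a, g.ValidStrat a (prof a)) ∧
    ∀ a s', g.ValidStrat a s' →
      ¬ g.runPref a (g.play prof) (g.play (Function.update prof a s'))

/-- Optimality of the strategy `s` of player `a` is regular using `D` bits. -/
def OptRegBits (a : A) (s : List V → V) (D : ℕ) : Prop :=
  ∃ (Q : Type) (_ : Fintype Q) (step : Q → V → Q) (init : Q) (acc : Set Q),
    Fintype.card Q ≤ 2 ^ D ∧
      ∀ l, g.IsHist l → (l.foldl step init ∈ acc ↔ g.OptimalAt a s l)

/-- Player `a` has the optimality-is-regular property in `g`. -/
def OIR (a : A) : Prop :=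
  ∀ s, g.ValidStrat a s → FinMem s →
    ∃ (Q : Type) (_ : Fintype Q) (step : Q → V → Q) (init : Q) (acc : Set Q),
      ∀ l, g.IsHist l → (l.foldl step init ∈ acc ↔ g.OptimalAt a s l)

/-- The two-player antagonistic game associated to player `a`: Player `true`
controls `V_a` with preference `≺_a`, Player `false` the remaining vertices
with the inverse preference. -/
def anta [DecidableEq A] (a : A) : Game V C Bool where
  edge := g.edge
  serial := g.serial
  start := g.start
  owner := fun v => decide (g.owner v = a)
  color := g.color
  pref := fun p x y => if p = true then g.pref a x y else g.pref a y x

/-- The cumulative glued histories `h₀⌢h₁⌢…⌢h_n`. -/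
def _root_.GG.cumul (h₀ : List V) (hs : ℕ → List V) : ℕ → List V
  | 0 => h₀
  | n + 1 => glueL (GG.cumul h₀ hs n) (hs n)

/-- The preference of player `a` is Mont in `g`. -/
def MontPref (a : A) : Prop :=
  ∀ (h₀ : List V) (ρ : ℕ → V) (hs : ℕ → List V),
    g.IsHist h₀ → UltPeriodic ρ →
    (∀ n, g.IsRun (glueR (GG.cumul h₀ hs n) ρ)) →
    (∀ n, g.runPref a (glueR (GG.cumul h₀ hs n) ρ) (glueR (GG.cumul h₀ hs (n + 1)) ρ)) →
    ∀ lim : ℕ → V,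
      (∀ n k, k < (GG.cumul h₀ hs n).dropLast.length →
        lim k = (GG.cumul h₀ hs n).dropLast.getD k g.start) →
      (∀ N, ∃ n, N < (GG.cumul h₀ hs n).dropLast.length) →
      g.runPref a (glueR h₀ ρ) lim

/-- Player `a`'s preference is automatic-piecewise prefix-linear in `g`. -/
def APPLin (a : A) : Prop :=
  ∃ (Q : Type) (_ : Fintype Q) (step : Q → V → Q) (init : Q),
    ∀ h h', g.IsHist h → g.IsHist h' →
      h.foldl step init = h'.foldl step init →
      g.lastV h = g.lastV h' ∧
        ∀ ρ ρ' : ℕ → V,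
          g.IsRun (glueR h ρ) → g.IsRun (glueR h ρ') →
          g.IsRun (glueR h' ρ) → g.IsRun (glueR h' ρ') →
          (g.runPref a (glueR h ρ) (glueR h ρ') ↔ g.runPref a (glueR h' ρ) (glueR h' ρ'))

end Game

end GG

open GG

/-!
Optimality of `s^h` means `γ_a(h, s^h) = Γ_a(h) ⊆ γ_a(h, t)` for every strategy `t`. A threshold `ρ`
beaten strictly by some `t` lies outside `γ_a(h, t)`, hence outside `γ_a(h, s^h)`, i.e. `s^h` beats
it too. In the antagonistic game, Player 2 winning `(g^h)_{a,ρ}` means that player `b` never does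
worse than `ρ` for `≺_b`; the same inclusion, together with irreflexivity and transitivity of
incomparability of `≺_b`, transfers this from any winning strategy to the optimal one. Shifting a
strategy preserves validity and the memory bound, which gives the determinacy statement.
-/

namespace GG

variable {V C A : Type}

theorem SWO.comap {r : (ℕ → C) → (ℕ → C) → Prop} (h : SWO r) (f : (ℕ → C) → (ℕ → C)) :
    SWO fun x y => r (f x) (f y) :=
  ⟨fun _ => h.1 _, fun _ _ _ => h.2.1 _ _ _, fun _ _ _ => h.2.2 _ _ _⟩

theorem UsesMem.shiftStrat {m : ℕ} {s : List V → V} (hs : UsesMem m s) (l : List V) :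
    UsesMem m (shiftStrat l s) := by
  obtain ⟨σ, M₀, hσ⟩ := hs
  refine ⟨σ, l.dropLast.foldl (fun M u => (σ (u, M)).2) M₀, fun l' v => ?_⟩
  simpa [GG.shiftStrat, List.foldl_append] using hσ (l.dropLast ++ l') v

namespace Game

variable (g : Game V C A)

theorem getLast?_eq_some_lastV {l : List V} (hl : l ≠ []) : l.getLast? = some (g.lastV l) := by
  simp [lastV, List.getLast?_eq_some_getLast hl]

theorem lastV_dropLast_append {l l' : List V} (hl' : l' ≠ []) :
    g.lastV (l.dropLast ++ l') = (g.future l).lastV l' := by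
  simp [lastV, future, List.getLast?_append_of_ne_nil _ hl', List.getLast?_eq_some_getLast hl']

variable {g}

theorem IsHist.dropLast_append {l l' : List V} (hl : g.IsHist l)
    (hl' : (g.future l).IsHist l') : g.IsHist (l.dropLast ++ l') := by
  obtain ⟨hne, hhead, hchain⟩ := hl
  obtain ⟨x, t, rfl, hx, hchain'⟩ : ∃ x t, l' = x :: t ∧ x = g.lastV l ∧ (x :: t).IsChain g.edge := by
    obtain ⟨hne', hhead', hchain'⟩ := hl'
    obtain ⟨x, t, rfl⟩ := List.exists_cons_of_ne_nil hne'
    exact ⟨x, t, rfl, Option.some.inj hhead', hchain'⟩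
  have hsplit : l.dropLast ++ [x] = l :=
    List.dropLast_append_getLast? x (by simp [hx, g.getLast?_eq_some_lastV hne])
  have hglue : l.dropLast ++ x :: t = l ++ t := by
    conv_rhs => rw [← hsplit]
    simp
  rw [hglue]
  refine ⟨by simp [hne], by rw [List.head?_append_of_ne_nil _ hne, hhead], ?_⟩
  refine List.isChain_append.mpr ⟨hchain, hchain'.tail, fun a ha b hb => ?_⟩
  rw [g.getLast?_eq_some_lastV hne, Option.mem_some_iff, ← hx] at ha
  subst ha
  exact List.isChain_cons.mp hchain' |>.1 b hb

theorem ValidOn.shiftStrat {P : V → Prop} {s : List V → V} (hs : g.ValidOn P s) {l : List V}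
    (hl : g.IsHist l) : (g.future l).ValidOn P (GG.shiftStrat l s) := by
  intro l' hl' hP
  have hlast := g.lastV_dropLast_append (l := l) hl'.1
  rw [← hlast] at hP ⊢
  exact hs _ (hl.dropLast_append hl') hP

theorem Optimal.gam_subset {a : A} {s t : List V → V} (hs : g.Optimal a s)
    (ht : g.ValidStrat a t) : g.gam a s ⊆ g.gam a t :=
  hs ▸ Set.biInter_subset_of_mem ht

theorem wins1_iff_notMem_gam {a : A} {ρ : ℕ → V} (hρ : g.IsRun ρ) {s : List V → V} :
    g.Wins1 a ρ s ↔ g.ValidStrat a s ∧ ρ ∉ g.gam a s := by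
  simp [Wins1, gam, hρ]

theorem Optimal.wins1 {a : A} {ρ : ℕ → V} {s : List V → V} (hopt : g.Optimal a s)
    (hs : g.ValidStrat a s) (hρ : g.IsRun ρ) (hwin : ∃ t, g.Wins1 a ρ t) : g.Wins1 a ρ s := by
  obtain ⟨t, ht⟩ := hwin
  rw [wins1_iff_notMem_gam hρ] at ht ⊢
  exact ⟨hs, fun hmem => ht.2 (hopt.gam_subset ht.1 hmem)⟩

theorem Optimal.wins1NS {a : A} {ρ : ℕ → V} {s : List V → V} (hswo : SWO (g.pref a))
    (hopt : g.Optimal a s) (hs : g.ValidStrat a s) (hwin : ∃ t, g.Wins1NS a ρ t) :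
    g.Wins1NS a ρ s := by
  obtain ⟨t, ht, htwin⟩ := hwin
  refine ⟨hs, fun ρ' hρ' hc hlt => ?_⟩
  -- `ρ'` itself witnesses `ρ' ∈ γ_a(s) ⊆ γ_a(t)`; then `¬ ρ' ≺ ρ''` and `¬ ρ'' ≺ ρ` refute `ρ' ≺ ρ`
  obtain ⟨-, ρ'', hρ'', hc'', hn⟩ := hopt.gam_subset ht ⟨hρ', ρ', hρ', hc, hswo.1 _⟩
  exact hswo.2.2 _ _ _ hn (htwin ρ'' hρ'' hc'') hlt

theorem wins2_iff_wins1NS_not {g : Game V C Bool}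
    (hant : ∀ x y, g.pref false x y ↔ g.pref true y x) {p : Bool} {ρ : ℕ → V}
    {s : List V → V} : g.Wins2 p ρ s ↔ g.Wins1NS (!p) ρ s := by
  have howner : (fun v => g.owner v ≠ p) = fun v => g.owner v = !p := by
    simp only [Bool.eq_not_iff]
  have hpref : ∀ ρ', g.runPref p ρ ρ' ↔ g.runPref (!p) ρ' ρ := by
    cases p <;> simp [runPref, hant]
  simp only [Wins2, Wins1NS, ValidCo, ValidStrat, CompatCo, Compat, howner, hpref]

end Game

end GG

open GG

theorem stmt2_general
    {V C : Type}
    (g : GG.Game V C Bool)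
    (hswo : ∀ p, GG.SWO (g.pref p))
    (hant : ∀ p q, g.pref false p q ↔ g.pref true q p) :
    (∀ sa, g.ValidStrat true sa → g.SubgameOptimal true sa →
      ∀ (l : List V), g.IsHist l → ∀ ρ, (g.future l).IsRun ρ →
        (∃ s, (g.future l).Wins1 true ρ s) →
        (g.future l).Wins1 true ρ (GG.shiftStrat l sa)) ∧
    (∀ m : ℕ,
      (∀ (p : Bool) (l : List V), g.IsHist l → ∀ ρ, (g.future l).IsRun ρ →
        (∃ s, (g.future l).Wins1 p ρ s) ∨ ∃ s, (g.future l).Wins2 p ρ s) →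
      (∀ p : Bool, ∃ s, g.ValidStrat p s ∧ g.SubgameOptimal p s ∧ GG.UsesMem m s) →
      ∀ (p : Bool) (l : List V), g.IsHist l → ∀ ρ, (g.future l).IsRun ρ →
        (∃ s, (g.future l).Wins1 p ρ s ∧ GG.UsesMem m s) ∨
        ∃ s, (g.future l).Wins2 p ρ s ∧ GG.UsesMem m s) := by
  refine ⟨fun sa hval hopt l hl ρ hρ hwin =>
    (hopt l hl).wins1 (hval.shiftStrat hl) hρ hwin, ?_⟩
  intro m hdet hopt p l hl ρ hρ
  rcases hdet p l hl ρ hρ with hwin | hwin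
  · obtain ⟨s, hval, hsopt, hmem⟩ := hopt p
    exact Or.inl ⟨_, (hsopt l hl).wins1 (hval.shiftStrat hl) hρ hwin, hmem.shiftStrat l⟩
  · obtain ⟨s, hval, hsopt, hmem⟩ := hopt (!p)
    have hant' : ∀ x y, (g.future l).pref false x y ↔ (g.future l).pref true y x :=
      fun _ _ => hant _ _
    simp only [Game.wins2_iff_wins1NS_not hant'] at hwin ⊢
    exact Or.inr ⟨_, (hsopt l hl).wins1NS ((hswo _).comap _) (hval.shiftStrat hl) hwin,
      hmem.shiftStrat l⟩

/-- Subgame-optimal strategies win all winnable future threshold games; hence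
uniformly finite-memory subgame-optimal strategies for both players yield
uniform finite-memory determinacy of all future threshold games. -/
theorem stmt2
    {V C : Type} [Fintype V]
    (g : GG.Game V C Bool)
    (hswo : ∀ p, GG.SWO (g.pref p))
    (hant : ∀ p q, g.pref false p q ↔ g.pref true q p) :
    (∀ sa, g.ValidStrat true sa → g.SubgameOptimal true sa →
      ∀ (l : List V), g.IsHist l → ∀ ρ, (g.future l).IsRun ρ →
        (∃ s, (g.future l).Wins1 true ρ s) →
        (g.future l).Wins1 true ρ (GG.shiftStrat l sa)) ∧
    (∀ m : ℕ,
      (∀ (p : Bool) (l : List V), g.IsHist l → ∀ ρ, (g.future l).IsRun ρ →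
        (∃ s, (g.future l).Wins1 p ρ s) ∨ ∃ s, (g.future l).Wins2 p ρ s) →
      (∀ p : Bool, ∃ s, g.ValidStrat p s ∧ g.SubgameOptimal p s ∧ GG.UsesMem m s) →
      ∀ (p : Bool) (l : List V), g.IsHist l → ∀ ρ, (g.future l).IsRun ρ →
        (∃ s, (g.future l).Wins1 p ρ s ∧ GG.UsesMem m s) ∨
        ∃ s, (g.future l).Wins2 p ρ s ∧ GG.UsesMem m s) :=
  stmt2_general g hswo hant
end

section
/- Fix a set C of colors, a player a, and a strict weak order ≺_a on C^ω such that for every one-player game for a (with colors in C and preference ≺_a) there exists m ∈ ℕ such that a wins her winnable threshold games in it using uniformly finite memory m. Then in every antagonistic game with players a and b (colors in C, a's preference ≺_a), for every finite-memory strategy s_b of b there exists a finite-memory strategy s_a of a that is a best response to s_b. -/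
open GG

/-! Fix the finite memory of `s_b` and take the product of the arena with it: a one-player
game for `a` whose runs project exactly onto the runs consistent with `s_b`. Among the finitely
many runs that `m`-bit strategic updates generate in that product, pick a `≺_a`-maximal one `π`.
No run at all beats `π`: otherwise the threshold game `g_{a,π}` would be winnable, hence won with
`m` bits of memory, and the play of that winning strategy is again an `m`-bit run beating `π`.
Player `a` then just follows the projection of `π`, which an automaton can replay. -/

namespace GG

theorem SWO.isStrictOrder {C : Type} {r : (ℕ → C) → (ℕ → C) → Prop} (h : SWO r) :
    IsStrictOrder (ℕ → C) r where
  irrefl := h.1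
  trans := h.2.1

section Memory

variable {V β : Type}

/-- `memSeq σ M₀ ρ n` is the memory content after reading `ρ 0, …, ρ (n - 1)`. -/
def memSeq (σ : V × β → V × β) (M₀ : β) (ρ : ℕ → V) : ℕ → β
  | 0 => M₀
  | n + 1 => (σ (ρ n, memSeq σ M₀ ρ n)).2

/-- `UsesMem m s` says `Induces σ M₀ s` for some `σ`, `M₀` with memory `β = Fin m → Bool`. -/
def Induces (σ : V × β → V × β) (M₀ : β) (s : List V → V) : Prop :=
  ∀ (l : List V) (v : V), s (l ++ [v]) = (σ (v, l.foldl (fun M u => (σ (u, M)).2) M₀)).1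

theorem histUpTo_eq_concat (ρ : ℕ → V) (n : ℕ) :
    histUpTo ρ n = (List.range n).map ρ ++ [ρ n] := by
  simp [histUpTo, List.range_succ]

theorem histUpTo_succ (ρ : ℕ → V) (n : ℕ) :
    histUpTo ρ (n + 1) = histUpTo ρ n ++ [ρ (n + 1)] := by
  simp [histUpTo, List.range_succ]

theorem length_histUpTo (ρ : ℕ → V) (n : ℕ) : (histUpTo ρ n).length = n + 1 := by
  simp [histUpTo]

theorem foldl_map_range_eq_memSeq (σ : V × β → V × β) (M₀ : β) (ρ : ℕ → V) (n : ℕ) :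
    ((List.range n).map ρ).foldl (fun M u => (σ (u, M)).2) M₀ = memSeq σ M₀ ρ n := by
  induction n with
  | zero => rfl
  | succ n ih => rw [List.range_succ, List.map_append, List.foldl_append, ih]; rfl

theorem memSeq_iterate (σ : V × β → V × β) (x : V × β) (n : ℕ) :
    memSeq σ x.2 (fun k => (σ^[k] x).1) n = (σ^[n] x).2 := by
  induction n with
  | zero => rfl
  | succ n ih => rw [memSeq, ih, Function.iterate_succ_apply']

theorem foldl_const_eq_iterate (τ : β → β) (l : List V) (M₀ : β) :
    l.foldl (fun M _ => τ M) M₀ = τ^[l.length] M₀ := by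
  induction l generalizing M₀ with
  | nil => rfl
  | cons _ l ih => rw [List.foldl_cons, ih, List.length_cons, Function.iterate_succ_apply]

namespace Induces

variable {σ : V × β → V × β} {M₀ : β} {s : List V → V}

theorem apply_histUpTo (hs : Induces σ M₀ s) (ρ : ℕ → V) (n : ℕ) :
    s (histUpTo ρ n) = (σ (ρ n, memSeq σ M₀ ρ n)).1 := by
  rw [histUpTo_eq_concat, hs, foldl_map_range_eq_memSeq]

theorem compatOn_iterate (hs : Induces σ M₀ s) (P : V → Prop) (v : V) :
    CompatOn P s (fun n => (σ^[n] (v, M₀)).1) := fun n _ => by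
  rw [hs.apply_histUpTo, memSeq_iterate σ (v, M₀)]
  exact congrArg Prod.fst (Function.iterate_succ_apply' σ n (v, M₀))

/-- Any finite memory is encoded in `Nat.card β` bits by a one-hot code. -/
theorem finMem [Finite β] (hs : Induces σ M₀ s) : FinMem s := by
  classical
  let e := Finite.equivFin β
  let enc : β → (Fin (Nat.card β) → Bool) := fun b j => decide (j = e b)
  have henc : enc.Injective := fun b b' h =>
    (by simpa [enc] using congrFun h (e b') : b' = b).symm
  have : Nonempty β := ⟨M₀⟩
  have hdec : ∀ b, Function.invFun enc (enc b) = b := Function.leftInverse_invFun henc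
  refine ⟨Nat.card β, fun x => ((σ (x.1, Function.invFun enc x.2)).1,
    enc (σ (x.1, Function.invFun enc x.2)).2), enc M₀, fun l v => ?_⟩
  rw [hs, List.foldl_hom enc (g₁ := fun M u => (σ (u, M)).2) (fun M u => by simp only [hdec])]
  simp only [hdec]

end Induces

end Memory

namespace Game

section Plays

variable {V C A : Type} (g : Game V C A)

theorem lastV_concat (l : List V) (x : V) : g.lastV (l ++ [x]) = x := by
  simp [lastV]

theorem lastV_histUpTo (ρ : ℕ → V) (n : ℕ) : g.lastV (histUpTo ρ n) = ρ n := by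
  rw [histUpTo_eq_concat, lastV_concat]

theorem isHist_histUpTo {ρ : ℕ → V} {n : ℕ} (h0 : ρ 0 = g.start)
    (hedge : ∀ k < n, g.edge (ρ k) (ρ (k + 1))) : g.IsHist (histUpTo ρ n) :=
  ⟨by simp [histUpTo], by simp [histUpTo, List.range_succ_eq_map, h0],
    (List.isChain_map ρ).2 ((List.isChain_range_succ _ n).2 hedge)⟩

variable {g}

theorem histUpTo_eq_of_compat {prof : A → List V → V} {ρ₁ ρ₂ : ℕ → V}
    (h₁ : ρ₁ 0 = g.start) (h₂ : ρ₂ 0 = g.start)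
    (hc₁ : ∀ a, g.Compat a (prof a) ρ₁) (hc₂ : ∀ a, g.Compat a (prof a) ρ₂) (n : ℕ) :
    histUpTo ρ₁ n = histUpTo ρ₂ n := by
  induction n with
  | zero => simp [histUpTo, h₁, h₂]
  | succ n ih =>
    have hn : ρ₁ n = ρ₂ n := by rw [← g.lastV_histUpTo ρ₁, ih, g.lastV_histUpTo]
    rw [histUpTo_succ, histUpTo_succ, hc₁ _ n rfl, hc₂ (g.owner (ρ₁ n)) n (by rw [hn]), ih]

theorem eq_of_compat {prof : A → List V → V} {ρ₁ ρ₂ : ℕ → V}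
    (h₁ : ρ₁ 0 = g.start) (h₂ : ρ₂ 0 = g.start)
    (hc₁ : ∀ a, g.Compat a (prof a) ρ₁) (hc₂ : ∀ a, g.Compat a (prof a) ρ₂) : ρ₁ = ρ₂ :=
  funext fun n => by
    rw [← g.lastV_histUpTo ρ₁, histUpTo_eq_of_compat h₁ h₂ hc₁ hc₂, g.lastV_histUpTo]

theorem isRun_of_compat {prof : A → List V → V} {ρ : ℕ → V} (h0 : ρ 0 = g.start)
    (hc : ∀ a, g.Compat a (prof a) ρ) (hv : ∀ a, g.ValidStrat a (prof a)) : g.IsRun ρ := by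
  refine ⟨h0, fun n => ?_⟩
  induction n using Nat.strong_induction_on with
  | _ n ih =>
    have hedge := hv (g.owner (ρ n)) _ (g.isHist_histUpTo h0 ih) (by rw [g.lastV_histUpTo])
    rwa [g.lastV_histUpTo, ← hc _ n rfl] at hedge

variable (g)

theorem play_zero (prof : A → List V → V) : g.play prof 0 = g.start := by
  simp [play, playHist, lastV]

theorem playHist_eq_histUpTo (prof : A → List V → V) (n : ℕ) :
    g.playHist prof n = histUpTo (g.play prof) n := by
  induction n with
  | zero => simp [playHist, histUpTo, play_zero]
  | succ n ih =>
    rw [histUpTo_succ, ← ih, playHist]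
    simp only [play, playHist, lastV_concat]

theorem compat_play (prof : A → List V → V) (a : A) : g.Compat a (prof a) (g.play prof) := by
  intro n hn
  show g.lastV (g.playHist prof (n + 1)) = _
  rw [playHist, lastV_concat, ← playHist_eq_histUpTo, ← hn]
  rfl

end Plays

section OnePlayer

variable {V C A : Type} {g : Game V C A} {a : A}

theorem compat_of_forall_owner (hown : ∀ v, g.owner v = a) {s : List V → V} {ρ : ℕ → V}
    (h : g.Compat a s ρ) (b : A) : g.Compat b s ρ :=
  fun n _ => h n (hown _)

theorem validStrat_of_forall_owner (hown : ∀ v, g.owner v = a) {s : List V → V}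
    (h : g.ValidStrat a s) (b : A) : g.ValidStrat b s :=
  fun l hl _ => h l hl (hown _)

end OnePlayer

section FollowRun

variable {V C A : Type} (g : Game V C A)

open Classical in
noncomputable def seqStrat (ρ : ℕ → V) (l : List V) : V :=
  if g.edge (g.lastV l) (ρ l.length) then ρ l.length else Classical.choose (g.serial (g.lastV l))

theorem validOn_seqStrat (P : V → Prop) (ρ : ℕ → V) : g.ValidOn P (g.seqStrat ρ) := by
  intro l _ _
  unfold seqStrat
  split_ifs with h
  exacts [h, Classical.choose_spec _]

variable {g}

theorem compatOn_seqStrat {P : V → Prop} {ρ : ℕ → V}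
    (h : ∀ n, P (ρ n) → g.edge (ρ n) (ρ (n + 1))) : CompatOn P (g.seqStrat ρ) ρ := by
  intro n hn
  have hedge : g.edge (g.lastV (histUpTo ρ n)) (ρ (histUpTo ρ n).length) := by
    rw [g.lastV_histUpTo, length_histUpTo]
    exact h n hn
  rw [seqStrat, if_pos hedge, length_histUpTo]

/-- The strategy only has to count steps, so an automaton generating `ρ` is a memory for it. -/
theorem finMem_seqStrat {S : Type} [Finite S] (τ : S → S) (r : S → V) (s₀ : S) :
    FinMem (g.seqStrat fun n => r (τ^[n] s₀)) := by
  classical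
  refine Induces.finMem (M₀ := s₀) (σ := fun x =>
    (if g.edge x.1 (r (τ x.2)) then r (τ x.2) else Classical.choose (g.serial x.1), τ x.2)) ?_
  intro l v
  simp only [seqStrat, lastV_concat, List.length_append, List.length_singleton,
    foldl_const_eq_iterate, Function.iterate_succ_apply']

theorem wins1_seqStrat (hown : ∀ v, g.owner v = a) {ρ π : ℕ → V} (hπ : g.IsRun π)
    (hlt : g.runPref a ρ π) : g.Wins1 a ρ (g.seqStrat π) := by
  refine ⟨g.validOn_seqStrat _ π, fun ρ' hρ' hc => ?_⟩
  have hfollow : ∀ b, g.Compat b (g.seqStrat π) π :=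
    compat_of_forall_owner hown (compatOn_seqStrat fun n _ => hπ.2 n)
  rwa [eq_of_compat (prof := fun _ => g.seqStrat π) hρ'.1 hπ.1
    (compat_of_forall_owner hown hc) hfollow]

end FollowRun

section Threshold

variable {V C A : Type} (g : Game V C A)

def WinsWinnableThresholdsWithMem (a : A) (m : ℕ) : Prop :=
  ∀ ρ, g.IsRun ρ → (∃ s, g.Wins1 a ρ s) → ∃ s, g.Wins1 a ρ s ∧ UsesMem m s

variable {g}

theorem exists_iterate_isRun_maximal [Finite V] {a : A} (hown : ∀ v, g.owner v = a)
    [IsStrictOrder (ℕ → C) (g.pref a)] {m : ℕ} (hm : g.WinsWinnableThresholdsWithMem a m) :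
    ∃ (τ : V × (Fin m → Bool) → V × (Fin m → Bool)) (M₀ : Fin m → Bool),
      g.IsRun (fun n => (τ^[n] (g.start, M₀)).1) ∧
        ∀ π, g.IsRun π → ¬ g.runPref a (fun n => (τ^[n] (g.start, M₀)).1) π := by
  let gen : (V × (Fin m → Bool) → V × (Fin m → Bool)) × (Fin m → Bool) → ℕ → V :=
    fun p n => (p.1^[n] (g.start, p.2)).1
  let R := fun p q => g.runPref a (gen q) (gen p)
  have : IsTrans _ R := ⟨fun _ _ _ h₁ h₂ => _root_.trans (r := g.pref a) h₂ h₁⟩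
  have : Std.Irrefl R := ⟨fun _ => irrefl (r := g.pref a) _⟩
  have hne : {p | g.IsRun (gen p)}.Nonempty := by
    refine ⟨(fun x => (Classical.choose (g.serial x.1), x.2), fun _ => false), rfl, fun n => ?_⟩
    simp only [gen, Function.iterate_succ_apply']
    exact Classical.choose_spec _
  obtain ⟨⟨τ, M₀⟩, hrun, hmax⟩ := (Finite.wellFounded_of_trans_of_irrefl R).has_min _ hne
  refine ⟨τ, M₀, hrun, fun π hπ hlt => ?_⟩
  obtain ⟨s, ⟨hsv, hswin⟩, σ, N₀, hs⟩ := hm _ hrun ⟨_, wins1_seqStrat hown hπ hlt⟩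
  have hc : ∀ b, g.Compat b s (gen (σ, N₀)) :=
    compat_of_forall_owner hown (Induces.compatOn_iterate hs _ _)
  have hσrun : g.IsRun (gen (σ, N₀)) :=
    isRun_of_compat (prof := fun _ => s) rfl hc (validStrat_of_forall_owner hown hsv)
  exact hmax (σ, N₀) hσrun (hswin _ hσrun (hc a))

end Threshold

section Product

variable {V C β : Type} (g : Game V C Bool)

/-- The moves of player `false`'s strategic update `σb` become forced edges. -/
def prodMem (σb : V × β → V × β) (M₀ : β) : Game (V × β) C Bool where
  edge p q := q.2 = (σb p).2 ∧ if g.owner p.1 = true then g.edge p.1 q.1 else q.1 = (σb p).1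
  serial p := by
    by_cases h : g.owner p.1 = true
    · obtain ⟨w, hw⟩ := g.serial p.1
      exact ⟨(w, (σb p).2), rfl, by simp [h, hw]⟩
    · exact ⟨σb p, rfl, by simp [h]⟩
  start := (g.start, M₀)
  owner _ := true
  color p := g.color p.1
  pref _ := g.pref true

variable {g} {σb : V × β → V × β} {M₀ : β}

theorem isRun_prodMem_lift {sb : List V → V} (hsb : Induces σb M₀ sb) {ρ : ℕ → V}
    (hρ : g.IsRun ρ) (hc : g.Compat false sb ρ) :
    (g.prodMem σb M₀).IsRun (fun n => (ρ n, memSeq σb M₀ ρ n)) := by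
  refine ⟨Prod.ext hρ.1 rfl, fun n => ⟨rfl, ?_⟩⟩
  split_ifs with h
  · exact hρ.2 n
  · show ρ (n + 1) = (σb (ρ n, memSeq σb M₀ ρ n)).1
    rw [hc n (by simpa using h), hsb.apply_histUpTo]

theorem memSeq_fst_of_isRun_prodMem {π : ℕ → V × β} (hπ : (g.prodMem σb M₀).IsRun π) (n : ℕ) :
    memSeq σb M₀ (fun k => (π k).1) n = (π n).2 := by
  induction n with
  | zero => exact (congrArg Prod.snd hπ.1).symm
  | succ n ih => rw [memSeq, ih, (hπ.2 n).1]

theorem edge_fst_of_isRun_prodMem {π : ℕ → V × β} (hπ : (g.prodMem σb M₀).IsRun π) (n : ℕ)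
    (hn : g.owner (π n).1 = true) : g.edge (π n).1 (π (n + 1)).1 := by
  simpa [prodMem, hn] using (hπ.2 n).2

theorem compat_fst_of_isRun_prodMem {sb : List V → V} (hsb : Induces σb M₀ sb)
    {π : ℕ → V × β} (hπ : (g.prodMem σb M₀).IsRun π) :
    g.Compat false sb (fun n => (π n).1) := by
  intro n hn
  have hmove := (hπ.2 n).2
  rw [if_neg (by simpa using hn)] at hmove
  show (π (n + 1)).1 = _
  rw [hmove, hsb.apply_histUpTo, memSeq_fst_of_isRun_prodMem hπ]

end Product

end Game

end GG

/-- Lemma 4.4.1: if player `a` wins her winnable threshold games in every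
one-player game using uniformly finite memory, then in every antagonistic game
every finite-memory strategy of the opponent is met with a finite-memory best
response by `a`. Player `a` is `true`, player `b` is `false`. -/
theorem stmt8
    {C : Type}
    (prec : (ℕ → C) → (ℕ → C) → Prop) (hswo : GG.SWO prec)
    (hone : ∀ (V' : Type) [Fintype V'] (g' : GG.Game V' C Bool),
      (∀ v, g'.owner v = true) → g'.pref true = prec →
      ∃ m, ∀ ρ, g'.IsRun ρ → (∃ s, g'.Wins1 true ρ s) →
        ∃ s, g'.Wins1 true ρ s ∧ GG.UsesMem m s) :
    ∀ (V : Type) [Fintype V] (g : GG.Game V C Bool),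
      g.pref true = prec → (∀ p q, g.pref false p q ↔ prec q p) →
      ∀ sb, g.ValidStrat false sb → GG.FinMem sb →
        ∃ sa, g.ValidStrat true sa ∧ GG.FinMem sa ∧
          ∀ sa', g.ValidStrat true sa' →
            ¬ g.runPref true (g.play (fun p => if p = true then sa else sb))
                (g.play (fun p => if p = true then sa' else sb)) := by
  intro V _ g hpt _ sb hsbv ⟨mb, σb, Mb0, hsb⟩
  let g' := g.prodMem σb Mb0
  have : IsStrictOrder (ℕ → C) (g'.pref true) := hpt ▸ hswo.isStrictOrder
  obtain ⟨m, hm⟩ := hone _ g' (fun _ => rfl) hpt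
  obtain ⟨τ, N₀, hπ, hmax⟩ := Game.exists_iterate_isRun_maximal (g := g') (fun _ => rfl) hm
  let ρ : ℕ → V := fun n => ((τ^[n] (g'.start, N₀)).1).1
  refine ⟨g.seqStrat ρ, g.validOn_seqStrat _ ρ, Game.finMem_seqStrat τ (fun x => x.1.1) _,
    fun sa' hsa' => ?_⟩
  have hplay : g.play (fun p => if p = true then g.seqStrat ρ else sb) = ρ := by
    refine Game.eq_of_compat (g.play_zero _) (congrArg Prod.fst hπ.1) (g.compat_play _) ?_
    rintro (_ | _)
    exacts [Game.compat_fst_of_isRun_prodMem hsb hπ,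
      Game.compatOn_seqStrat (Game.edge_fst_of_isRun_prodMem hπ)]
  have hrun : g.IsRun (g.play fun p => if p = true then sa' else sb) := by
    refine Game.isRun_of_compat (g.play_zero _) (g.compat_play _) ?_
    rintro (_ | _)
    exacts [hsbv, hsa']
  rw [hplay]
  exact hmax _ (Game.isRun_prodMem_lift hsb hrun (g.compat_play _ false))
end

section
/- Let g be a game on a finite graph and a a player whose preference is automatic-piecewise prefix-linear in g. Then player a has the optimality-is-regular property in g: for every finite-memory strategy s_a of a there is a deterministic finite automaton, reading histories as words over the vertex set, that accepts exactly the histories at which s_a is optimal. -/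
open GG

/-! Two histories that reach the same state of the prefix-linearity automaton end in the same
vertex and induce the same preference of `a` among their continuations, so their future games
agree on runs. If moreover a finite-memory strategy has the same memory content after both
histories with their last vertex removed (the future game glues along that vertex), the shifted
strategies agree on all histories of the future game. Optimality then holds at both histories or
at neither, so the product of the prefix-linearity automaton with the memory automaton, delayed by
one letter, recognizes the histories at which the strategy is optimal. -/

namespace GG

variable {V C A : Type}

lemma appSeq_length_add (l : List V) (ρ : ℕ → V) (n : ℕ) :
    appSeq l ρ (l.length + n) = ρ n := by
  simp [appSeq]

lemma appSeq_map (f : V → C) (l : List V) (ρ : ℕ → V) :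
    (fun n => f (appSeq l ρ n)) = appSeq (l.map f) (f ∘ ρ) := by
  funext n
  by_cases hn : n < l.length <;> simp [appSeq, hn]

lemma foldl_prodMk {α M N : Type} (f : M → α → M) (f' : N → α → N) (l : List α) (m : M)
    (n : N) :
    l.foldl (fun p v => (f p.1 v, f' p.2 v)) (m, n) = (l.foldl f m, l.foldl f' n) := by
  induction l generalizing m n with
  | nil => rfl
  | cons v l ih => exact ih _ _

def withPrev {α M : Type} (upd : M → α → M) (p : M × M) (v : α) : M × M := (upd p.1 v, p.1)

lemma foldl_withPrev {α M : Type} (upd : M → α → M) (m : M) (l : List α) :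
    l.foldl (withPrev upd) (m, m) = (l.foldl upd m, l.dropLast.foldl upd m) := by
  induction l using List.reverseRecOn with
  | nil => rfl
  | append_singleton l v ih => simp [withPrev, ih]

lemma exists_accepting_of_foldl_eq {α Q : Type} (step : Q → α → Q) (init : Q)
    (D P : List α → Prop)
    (hP : ∀ l l', D l → D l' → l.foldl step init = l'.foldl step init → (P l ↔ P l')) :
    ∃ acc : Set Q, ∀ l, D l → (l.foldl step init ∈ acc ↔ P l) :=
  ⟨(fun l => l.foldl step init) '' {l | D l ∧ P l}, fun l hl =>
    ⟨fun ⟨l', ⟨hl', hPl'⟩, heq⟩ => (hP l' l hl' hl heq).1 hPl', fun hPl => ⟨l, ⟨hl, hPl⟩, rfl⟩⟩⟩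

lemma apply_append_eq_of_foldl_eq {m : ℕ} {s : List V → V}
    {σ : V × (Fin m → Bool) → V × (Fin m → Bool)} {M₀ : Fin m → Bool}
    (hσ : ∀ (l : List V) (v : V), s (l ++ [v]) = (σ (v, l.foldl (fun M u => (σ (u, M)).2) M₀)).1)
    {p p' : List V}
    (hpp' : p.foldl (fun M u => (σ (u, M)).2) M₀ = p'.foldl (fun M u => (σ (u, M)).2) M₀)
    {w : List V} (hw : w ≠ []) : s (p ++ w) = s (p' ++ w) := by
  obtain ⟨u, v, rfl⟩ := (List.eq_nil_or_concat' w).resolve_left hw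
  simp only [← List.append_assoc, hσ, List.foldl_append, hpp']

namespace Game

variable (g : Game V C A)

lemma isRun_glueR {h : List V} {ρ : ℕ → V} (hh : g.IsHist h) (hρ : (g.future h).IsRun ρ) :
    g.IsRun (glueR h ρ) := by
  obtain ⟨hne, hhead, hchain⟩ := hh
  obtain ⟨p, v, rfl⟩ := (List.eq_nil_or_concat' h).resolve_left hne
  have hv : ρ 0 = v := by simpa [Game.future, Game.lastV] using hρ.1
  have hpre : ∀ n (hn : n < (p ++ [v]).length), glueR (p ++ [v]) ρ n = (p ++ [v])[n] := by
    intro n hn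
    rcases lt_or_ge n p.length with hlt | hge
    · simp [glueR, appSeq, hlt, List.getElem_append_left hlt]
    · obtain rfl : n = p.length := by simp at hn; omega
      simpa [glueR, appSeq] using hv
  have hpost : ∀ n, glueR (p ++ [v]) ρ (p.length + n) = ρ n := by
    simpa [glueR] using appSeq_length_add p ρ
  constructor
  · rw [hpre 0 (by simp)]
    simpa [List.head?_eq_getElem?] using hhead
  · intro n
    rcases lt_or_ge n p.length with hn | hn
    · rw [hpre n (by simp; omega), hpre (n + 1) (by simp; omega)]
      exact List.isChain_iff_getElem.1 hchain n (by simp; omega)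
    · obtain ⟨k, rfl⟩ := Nat.exists_eq_add_of_le hn
      rw [add_assoc, hpost, hpost]
      exact hρ.2 k

lemma future_runPref_iff (a : A) (h : List V) (ρ ρ' : ℕ → V) :
    (g.future h).runPref a ρ ρ' ↔ g.runPref a (glueR h ρ) (glueR h ρ') := by
  simp only [runPref, future, glueR, appSeq_map]
  rfl

section Congr

variable {g₁ g₂ : Game V C A}

lemma isRun_congr (hedge : g₁.edge = g₂.edge) (hstart : g₁.start = g₂.start) (ρ : ℕ → V) :
    g₁.IsRun ρ ↔ g₂.IsRun ρ := by
  simp only [IsRun, hedge, hstart]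

lemma validStrat_congr (hedge : g₁.edge = g₂.edge) (hstart : g₁.start = g₂.start)
    (howner : g₁.owner = g₂.owner) (a : A) (t : List V → V) :
    g₁.ValidStrat a t ↔ g₂.ValidStrat a t := by
  simp only [ValidStrat, ValidOn, IsHist, lastV, hedge, hstart, howner]

lemma compat_congr (howner : g₁.owner = g₂.owner) (a : A) {t t' : List V → V}
    (htt' : ∀ l, l ≠ [] → t l = t' l) (ρ : ℕ → V) :
    g₁.Compat a t ρ ↔ g₂.Compat a t' ρ := by
  have hne : ∀ n, histUpTo ρ n ≠ [] := by simp [histUpTo]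
  simp only [Compat, CompatOn, howner, htt' _ (hne _)]

lemma gam_congr (hedge : g₁.edge = g₂.edge) (hstart : g₁.start = g₂.start)
    (howner : g₁.owner = g₂.owner) (a : A)
    (hpref : ∀ ρ ρ', g₁.IsRun ρ → g₁.IsRun ρ' → (g₁.runPref a ρ ρ' ↔ g₂.runPref a ρ ρ'))
    {t t' : List V → V} (htt' : ∀ l, l ≠ [] → t l = t' l) :
    g₁.gam a t = g₂.gam a t' := by
  ext ρ
  simp only [gam, Set.mem_ofPred_eq, ← isRun_congr hedge hstart, compat_congr howner a htt']
  constructor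
  · rintro ⟨hρ, ρ', hρ', hc, hnot⟩
    exact ⟨hρ, ρ', hρ', hc, by rwa [← hpref ρ ρ' hρ hρ']⟩
  · rintro ⟨hρ, ρ', hρ', hc, hnot⟩
    exact ⟨hρ, ρ', hρ', hc, by rwa [hpref ρ ρ' hρ hρ']⟩

lemma optimal_congr (hedge : g₁.edge = g₂.edge) (hstart : g₁.start = g₂.start)
    (howner : g₁.owner = g₂.owner) (a : A)
    (hpref : ∀ ρ ρ', g₁.IsRun ρ → g₁.IsRun ρ' → (g₁.runPref a ρ ρ' ↔ g₂.runPref a ρ ρ'))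
    {t t' : List V → V} (htt' : ∀ l, l ≠ [] → t l = t' l) :
    g₁.Optimal a t ↔ g₂.Optimal a t' := by
  have hGam : g₁.Gam a = g₂.Gam a := by
    simp only [Gam, Set.mem_ofPred_eq, validStrat_congr hedge hstart howner,
      gam_congr hedge hstart howner a hpref (fun _ _ => rfl)]
  rw [Optimal, Optimal, hGam, gam_congr hedge hstart howner a hpref htt']

end Congr

lemma optimalAt_congr (a : A) (s : List V → V) {h h' : List V}
    (hh : g.IsHist h) (hh' : g.IsHist h') (hlast : g.lastV h = g.lastV h')
    (hpref : ∀ ρ ρ' : ℕ → V, g.IsRun (glueR h ρ) → g.IsRun (glueR h ρ') →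
      g.IsRun (glueR h' ρ) → g.IsRun (glueR h' ρ') →
      (g.runPref a (glueR h ρ) (glueR h ρ') ↔ g.runPref a (glueR h' ρ) (glueR h' ρ')))
    (hs : ∀ w, w ≠ [] → s (h.dropLast ++ w) = s (h'.dropLast ++ w)) :
    g.OptimalAt a s h ↔ g.OptimalAt a s h' := by
  have hrun : ∀ ρ, (g.future h).IsRun ρ ↔ (g.future h').IsRun ρ :=
    isRun_congr (g₁ := g.future h) (g₂ := g.future h') rfl hlast
  refine optimal_congr (g₁ := g.future h) (g₂ := g.future h') rfl hlast rfl a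
    (fun ρ ρ' hρ hρ' => ?_) hs
  rw [future_runPref_iff, future_runPref_iff]
  exact hpref ρ ρ' (g.isRun_glueR hh hρ) (g.isRun_glueR hh hρ')
    (g.isRun_glueR hh' ((hrun ρ).1 hρ)) (g.isRun_glueR hh' ((hrun ρ').1 hρ'))

end Game

end GG

theorem stmt13_general
    {V C A : Type}
    (g : GG.Game V C A)
    (a : A) (happl : g.APPLin a) :
    g.OIR a := by
  obtain ⟨Q, _, step, init, hQ⟩ := happl
  rintro s - ⟨m, σ, M₀, hσ⟩
  let upd : (Fin m → Bool) → V → (Fin m → Bool) := fun M u => (σ (u, M)).2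
  let Memory := (Fin m → Bool) × (Fin m → Bool)
  let step' : Q × Memory → V → Q × Memory := fun p v => (step p.1 v, withPrev upd p.2 v)
  have hfold : ∀ l : List V, l.foldl step' (init, (M₀, M₀)) =
      (l.foldl step init, (l.foldl upd M₀, l.dropLast.foldl upd M₀)) := fun l => by
    rw [foldl_prodMk, foldl_withPrev]
  obtain ⟨acc, hacc⟩ :=
    exists_accepting_of_foldl_eq step' (init, (M₀, M₀)) g.IsHist (g.OptimalAt a s)
      fun l l' hl hl' hstate => by
        simp only [hfold, Prod.mk.injEq] at hstate
        obtain ⟨hlast, hpref⟩ := hQ l l' hl hl' hstate.1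
        exact g.optimalAt_congr a s hl hl' hlast hpref fun w hw =>
          apply_append_eq_of_foldl_eq hσ hstate.2.2 hw
  exact ⟨Q × Memory, inferInstance, step', _, acc, hacc⟩

/-- Proposition 5.1: automatic-piecewise prefix-linear preferences have the
optimality-is-regular property. -/
theorem stmt13
    {V C A : Type} [Fintype V]
    (g : GG.Game V C A)
    (hswo : ∀ b, GG.SWO (g.pref b))
    (a : A) (happl : g.APPLin a) :
    g.OIR a :=
  stmt13_general g a happl
end
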